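/- arXiv:1204.6671 — 4 statements merged into one kernel-verified Lean document; each statement's English description precedes it below -/
import Mathlib

section
/- Let every function in F be continuous, and let φ be a bounded L_F-sentence. Then the destrictification de(φ) is true if and only if α(φ) ≥ 0. -/
/-! Syntax and semantics of bounded first-order sentences over ℝ in a signature `S`
of real-valued functions containing 0, negation, addition, absolute value and all
rational constants. -/

/-- A signature: for each arity `n`, a set of functions `(Fin n → ℝ) → ℝ`, required to
contain the constant `0`, unary negation, addition, the absolute value, and all
rational constants. -/
structure Sig : Type 1 where
  mem : ∀ n : ℕ, Set ((Fin n → ℝ) → ℝ)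
  zero_mem : (fun _ : Fin 0 → ℝ => (0 : ℝ)) ∈ mem 0
  neg_mem : (fun v : Fin 1 → ℝ => -(v 0)) ∈ mem 1
  add_mem : (fun v : Fin 2 → ℝ => v 0 + v 1) ∈ mem 2
  abs_mem : (fun v : Fin 1 → ℝ => |v 0|) ∈ mem 1
  rat_mem : ∀ q : ℚ, (fun _ : Fin 0 → ℝ => (q : ℝ)) ∈ mem 0

/-- Terms: variables (indexed by ℕ) and applications of functions of the signature. -/
inductive RTerm (S : Sig) : Type
  | var : ℕ → RTerm S
  | app : (k : ℕ) → (f : (Fin k → ℝ) → ℝ) → f ∈ S.mem k → (Fin k → RTerm S) → RTerm S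

variable {S : Sig}

/-- Value of a term under an assignment of the variables. -/
noncomputable def RTerm.eval (σ : ℕ → ℝ) : RTerm S → ℝ
  | .var n => σ n
  | .app _ f _ ts => f fun i => (ts i).eval σ

/-- The variable `x` occurs in the term. -/
def RTerm.Occurs (x : ℕ) : RTerm S → Prop
  | .var n => n = x
  | .app _ _ _ ts => ∃ i, (ts i).Occurs x

/-- The term `-t`, built from the unary negation of the signature. -/
def RTerm.negT (t : RTerm S) : RTerm S :=
  .app 1 (fun v : Fin 1 → ℝ => -(v 0)) S.neg_mem fun _ => t

/-- Bounded `L_F`-formulas.  An atom `gt t c` (resp. `ge t c`) is the inequality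
`t > c` (resp. `t ≥ c`).  Genuine `L_F`-formulas have all atom thresholds `c = 0`
(`RFormula.Zeroed`); nonzero thresholds arise from the δ-perturbations. -/
inductive RFormula (S : Sig) : Type
  | gt : RTerm S → ℝ → RFormula S
  | ge : RTerm S → ℝ → RFormula S
  | and : RFormula S → RFormula S → RFormula S
  | or : RFormula S → RFormula S → RFormula S
  | ex : ℕ → RTerm S → RTerm S → RFormula S → RFormula S
  | all : ℕ → RTerm S → RTerm S → RFormula S → RFormula S

/-- Standard semantics over ℝ; the bound `[u,v]` is read as the closed interval
between `min u v` and `max u v` (`Set.uIcc`). -/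
def RFormula.Holds : RFormula S → (ℕ → ℝ) → Prop
  | .gt t c, σ => t.eval σ > c
  | .ge t c, σ => t.eval σ ≥ c
  | .and φ ψ, σ => φ.Holds σ ∧ ψ.Holds σ
  | .or φ ψ, σ => φ.Holds σ ∨ ψ.Holds σ
  | .ex x u v φ, σ => ∃ a ∈ Set.uIcc (u.eval σ) (v.eval σ), φ.Holds (Function.update σ x a)
  | .all x u v φ, σ => ∀ a ∈ Set.uIcc (u.eval σ) (v.eval σ), φ.Holds (Function.update σ x a)

/-- Truth of a (closed) formula: it holds under the (irrelevant) zero assignment. -/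
def RFormula.IsTrue (φ : RFormula S) : Prop := φ.Holds fun _ => 0

/-- The variable `x` occurs free in the formula. -/
def RFormula.FreeIn (x : ℕ) : RFormula S → Prop
  | .gt t _ => t.Occurs x
  | .ge t _ => t.Occurs x
  | .and φ ψ => φ.FreeIn x ∨ ψ.FreeIn x
  | .or φ ψ => φ.FreeIn x ∨ ψ.FreeIn x
  | .ex y u v φ => u.Occurs x ∨ v.Occurs x ∨ (x ≠ y ∧ φ.FreeIn x)
  | .all y u v φ => u.Occurs x ∨ v.Occurs x ∨ (x ≠ y ∧ φ.FreeIn x)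

/-- A sentence has no free variables. -/
def RFormula.IsSentence (φ : RFormula S) : Prop := ∀ x, ¬ φ.FreeIn x

/-- The bound terms of each quantifier do not involve the quantified variable. -/
def RFormula.BoundsOK : RFormula S → Prop
  | .gt _ _ => True
  | .ge _ _ => True
  | .and φ ψ => φ.BoundsOK ∧ ψ.BoundsOK
  | .or φ ψ => φ.BoundsOK ∧ ψ.BoundsOK
  | .ex x u v φ => ¬ u.Occurs x ∧ ¬ v.Occurs x ∧ φ.BoundsOK
  | .all x u v φ => ¬ u.Occurs x ∧ ¬ v.Occurs x ∧ φ.BoundsOK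

/-- All atom thresholds are `0`, i.e. all atoms are of the form `t > 0` or `t ≥ 0`. -/
def RFormula.Zeroed : RFormula S → Prop
  | .gt _ c => c = 0
  | .ge _ c => c = 0
  | .and φ ψ => φ.Zeroed ∧ ψ.Zeroed
  | .or φ ψ => φ.Zeroed ∧ ψ.Zeroed
  | .ex _ _ _ φ => φ.Zeroed
  | .all _ _ _ φ => φ.Zeroed

/-- A bounded `L_F`-sentence: atoms `t > 0` / `t ≥ 0`, quantifier bounds not involving
the quantified variable, and no free variables. -/
def RFormula.IsBoundedSentence (φ : RFormula S) : Prop :=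
  φ.Zeroed ∧ φ.BoundsOK ∧ φ.IsSentence

/-- δ-strengthening `φ^{+δ}`: every atom `t > 0` becomes `t > δ`, every `t ≥ 0`
becomes `t ≥ δ` (quantifier bounds unchanged). -/
def RFormula.strengthen (δ : ℝ) : RFormula S → RFormula S
  | .gt t c => .gt t (c + δ)
  | .ge t c => .ge t (c + δ)
  | .and φ ψ => .and (φ.strengthen δ) (ψ.strengthen δ)
  | .or φ ψ => .or (φ.strengthen δ) (ψ.strengthen δ)
  | .ex x u v φ => .ex x u v (φ.strengthen δ)
  | .all x u v φ => .all x u v (φ.strengthen δ)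

/-- δ-weakening `φ^{-δ}`: every atom `t > 0` becomes `t > -δ`, every `t ≥ 0`
becomes `t ≥ -δ` (quantifier bounds unchanged). -/
def RFormula.weaken (δ : ℝ) : RFormula S → RFormula S
  | .gt t c => .gt t (c - δ)
  | .ge t c => .ge t (c - δ)
  | .and φ ψ => .and (φ.weaken δ) (ψ.weaken δ)
  | .or φ ψ => .or (φ.weaken δ) (ψ.weaken δ)
  | .ex x u v φ => .ex x u v (φ.weaken δ)
  | .all x u v φ => .all x u v (φ.weaken δ)

/-- Syntactic negation: `t > c ↦ -t ≥ -c`, `t ≥ c ↦ -t > -c`, swapping `∧`/`∨` and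
`∃`/`∀` (quantifier bounds unchanged).  On zero-threshold atoms this is exactly
`t > 0 ↦ -t ≥ 0` and `t ≥ 0 ↦ -t > 0`. -/
def RFormula.neg : RFormula S → RFormula S
  | .gt t c => .ge t.negT (-c)
  | .ge t c => .gt t.negT (-c)
  | .and φ ψ => .or φ.neg ψ.neg
  | .or φ ψ => .and φ.neg ψ.neg
  | .ex x u v φ => .all x u v φ.neg
  | .all x u v φ => .ex x u v φ.neg

/-- Strictification `st(φ)`: every nonstrict atom becomes strict. -/
def RFormula.strict : RFormula S → RFormula S
  | .gt t c => .gt t c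
  | .ge t c => .gt t c
  | .and φ ψ => .and φ.strict ψ.strict
  | .or φ ψ => .or φ.strict ψ.strict
  | .ex x u v φ => .ex x u v φ.strict
  | .all x u v φ => .all x u v φ.strict

/-- Destrictification `de(φ)`: every strict atom becomes nonstrict. -/
def RFormula.destrict : RFormula S → RFormula S
  | .gt t c => .ge t c
  | .ge t c => .ge t c
  | .and φ ψ => .and φ.destrict ψ.destrict
  | .or φ ψ => .or φ.destrict ψ.destrict
  | .ex x u v φ => .ex x u v φ.destrict
  | .all x u v φ => .all x u v φ.destrict

/-- `φ` is δ-robust: truth of the δ-weakening implies truth of `φ`. -/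
def RFormula.Robust (δ : ℝ) (φ : RFormula S) : Prop :=
  (φ.weaken δ).IsTrue → φ.IsTrue

/-- All functions of the signature are continuous. -/
def Sig.ContinuousFuns (S : Sig) : Prop :=
  ∀ (k : ℕ) (f : (Fin k → ℝ) → ℝ), f ∈ S.mem k → Continuous f

/-- The translation `α`: atoms give the (shifted) term value, `∧ ↦ min`, `∨ ↦ max`,
`∃x∈[u,v] ↦ max over the interval`, `∀x∈[u,v] ↦ min over the interval` (the extrema
are expressed via `sSup`/`sInf` of the image; when all functions of the signature are
continuous they are attained, the intervals being nonempty and compact). -/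
noncomputable def RFormula.alpha : RFormula S → (ℕ → ℝ) → ℝ
  | .gt t c, σ => t.eval σ - c
  | .ge t c, σ => t.eval σ - c
  | .and φ ψ, σ => min (φ.alpha σ) (ψ.alpha σ)
  | .or φ ψ, σ => max (φ.alpha σ) (ψ.alpha σ)
  | .ex x u v φ, σ =>
      sSup ((fun a => φ.alpha (Function.update σ x a)) '' Set.uIcc (u.eval σ) (v.eval σ))
  | .all x u v φ, σ =>
      sInf ((fun a => φ.alpha (Function.update σ x a)) '' Set.uIcc (u.eval σ) (v.eval σ))


section Aux

open Set

lemma RTerm.eval_continuous (hS : S.ContinuousFuns) (t : RTerm S) :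
    Continuous fun σ => t.eval σ := by
  induction t with
  | var n => exact continuous_apply n
  | app k f hf ts ih =>
    exact (hS k f hf).comp (continuous_pi fun i => ih i)

lemma continuous_param_sSup {g : (ℕ → ℝ) → ℝ} (hg : Continuous g) (x : ℕ)
    {u v : (ℕ → ℝ) → ℝ} (hu : Continuous u) (hv : Continuous v) :
    Continuous fun σ =>
      sSup ((fun a => g (Function.update σ x a)) '' Set.uIcc (u σ) (v σ)) := by
  have key : ∀ σ, (fun a => g (Function.update σ x a)) '' Set.uIcc (u σ) (v σ)
      = (fun t : ℝ => g (Function.update σ x ((1 - t) * u σ + t * v σ))) '' Set.Icc 0 1 := by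
    intro σ
    rw [← segment_eq_uIcc, segment_eq_image, Set.image_image]
    simp [smul_eq_mul]
  simp_rw [key]
  refine isCompact_Icc.continuous_sSup ?_
  refine hg.comp (Continuous.update continuous_fst x ?_)
  fun_prop

lemma continuous_param_sInf {g : (ℕ → ℝ) → ℝ} (hg : Continuous g) (x : ℕ)
    {u v : (ℕ → ℝ) → ℝ} (hu : Continuous u) (hv : Continuous v) :
    Continuous fun σ =>
      sInf ((fun a => g (Function.update σ x a)) '' Set.uIcc (u σ) (v σ)) := by
  have key : ∀ σ, (fun a => g (Function.update σ x a)) '' Set.uIcc (u σ) (v σ)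
      = (fun t : ℝ => g (Function.update σ x ((1 - t) * u σ + t * v σ))) '' Set.Icc 0 1 := by
    intro σ
    rw [← segment_eq_uIcc, segment_eq_image, Set.image_image]
    simp [smul_eq_mul]
  simp_rw [key]
  refine isCompact_Icc.continuous_sInf ?_
  refine hg.comp (Continuous.update continuous_fst x ?_)
  fun_prop

lemma RFormula.alpha_continuous (hS : S.ContinuousFuns) (φ : RFormula S) :
    Continuous φ.alpha := by
  induction φ with
  | gt t c => exact (t.eval_continuous hS).sub continuous_const
  | ge t c => exact (t.eval_continuous hS).sub continuous_const
  | and φ ψ ihφ ihψ => exact ihφ.min ihψ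
  | or φ ψ ihφ ihψ => exact ihφ.max ihψ
  | ex x u v φ ih =>
    exact continuous_param_sSup ih x (u.eval_continuous hS) (v.eval_continuous hS)
  | all x u v φ ih =>
    exact continuous_param_sInf ih x (u.eval_continuous hS) (v.eval_continuous hS)

lemma RFormula.holds_destrict_iff (hS : S.ContinuousFuns) (φ : RFormula S) (σ : ℕ → ℝ) :
    φ.destrict.Holds σ ↔ 0 ≤ φ.alpha σ := by
  induction φ generalizing σ with
  | gt t c => simpa [RFormula.destrict, RFormula.Holds, RFormula.alpha] using
      (sub_nonneg (a := t.eval σ) (b := c)).symm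
  | ge t c => simpa [RFormula.destrict, RFormula.Holds, RFormula.alpha] using
      (sub_nonneg (a := t.eval σ) (b := c)).symm
  | and φ ψ ihφ ihψ =>
    simp [RFormula.destrict, RFormula.Holds, RFormula.alpha, le_min_iff, ihφ, ihψ]
  | or φ ψ ihφ ihψ =>
    simp [RFormula.destrict, RFormula.Holds, RFormula.alpha, le_max_iff, ihφ, ihψ]
  | ex x u v φ ih =>
    set g : ℝ → ℝ := fun a => φ.alpha (Function.update σ x a) with hgdef
    have hgc : Continuous g :=
      (φ.alpha_continuous hS).comp (Continuous.update continuous_const x continuous_id)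
    have hne : (Set.uIcc (u.eval σ) (v.eval σ)).Nonempty := Set.nonempty_uIcc
    constructor
    · rintro ⟨a, ha, h0⟩
      have h0' : 0 ≤ g a := (ih _).mp h0
      exact h0'.trans (le_csSup (isCompact_uIcc.bddAbove_image hgc.continuousOn)
        (Set.mem_image_of_mem g ha))
    · intro h
      obtain ⟨a, ha, hmax⟩ := isCompact_uIcc.exists_isMaxOn hne hgc.continuousOn
      refine ⟨a, ha, (ih _).mpr (h.trans (csSup_le (hne.image g) ?_))⟩
      rintro _ ⟨b, hb, rfl⟩
      exact hmax hb
  | all x u v φ ih =>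
    set g : ℝ → ℝ := fun a => φ.alpha (Function.update σ x a) with hgdef
    have hgc : Continuous g :=
      (φ.alpha_continuous hS).comp (Continuous.update continuous_const x continuous_id)
    have hne : (Set.uIcc (u.eval σ) (v.eval σ)).Nonempty := Set.nonempty_uIcc
    constructor
    · intro h
      refine le_csInf (hne.image g) ?_
      rintro _ ⟨b, hb, rfl⟩
      exact (ih _).mp (h b hb)
    · intro h a ha
      exact (ih _).mpr (h.trans (csInf_le (isCompact_uIcc.bddBelow_image hgc.continuousOn)
        (Set.mem_image_of_mem g ha)))

end Aux

theorem destrict_iff_alpha_nonneg (S : Sig) (hS : S.ContinuousFuns)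
    (φ : RFormula S) (hφ : φ.IsBoundedSentence) :
    (φ.destrict).IsTrue ↔ φ.alpha (fun _ => 0) ≥ 0 := by
  exact φ.holds_destrict_iff hS (fun _ => 0)
end

section
/- Let every function in F be continuous, let φ be a bounded L_F-sentence, and let δ ≥ 0. Then st(φ^{+δ}) is true if and only if α(φ) > δ. -/
variable {S : Sig}

/-- Key uniform estimate: on an open nbhd of `x`, `g y t` is ε-close to `g x t` for all `t ∈ Icc 0 1`. -/
lemma tube_estimate {X : Type*} [TopologicalSpace X] {g : X → ℝ → ℝ}
    (hg : Continuous fun p : X × ℝ => g p.1 p.2) (x : X) {ε : ℝ} (hε : 0 < ε) :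
    ∀ᶠ y in nhds x, ∀ t ∈ Set.Icc (0:ℝ) 1, |g y t - g x t| < ε := by
  have hcx : Continuous (g x) := hg.comp (Continuous.prodMk_right x)
  have hcont : Continuous fun p : X × ℝ => |g p.1 p.2 - g x p.2| :=
    (hg.sub (hcx.comp continuous_snd)).abs
  have hno : IsOpen {p : X × ℝ | |g p.1 p.2 - g x p.2| < ε} :=
    isOpen_lt hcont continuous_const
  have hsub : ({x} ×ˢ Set.Icc (0:ℝ) 1) ⊆ {p : X × ℝ | |g p.1 p.2 - g x p.2| < ε} := by
    rintro ⟨y, t⟩ ⟨hy, ht⟩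
    simp only [Set.mem_singleton_iff] at hy
    subst hy
    simpa using hε
  obtain ⟨U, V, hU, _, hxU, hKV, hUV⟩ :=
    generalized_tube_lemma isCompact_singleton isCompact_Icc hno hsub
  filter_upwards [hU.mem_nhds (hxU rfl)] with y hy t ht
  exact hUV (Set.mk_mem_prod hy (hKV ht))

lemma continuous_sSup_image {X : Type*} [TopologicalSpace X] {g : X → ℝ → ℝ}
    (hg : Continuous fun p : X × ℝ => g p.1 p.2) :
    Continuous fun x => sSup (g x '' Set.Icc (0:ℝ) 1) := by
  have hne : (Set.Icc (0:ℝ) 1).Nonempty := ⟨0, by norm_num⟩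
  have hcx : ∀ x, Continuous (g x) := fun x => hg.comp (Continuous.prodMk_right x)
  have hbdd : ∀ x, BddAbove (g x '' Set.Icc (0:ℝ) 1) := fun x =>
    (isCompact_Icc.image (hcx x)).bddAbove
  rw [continuous_iff_continuousAt]
  intro x
  rw [ContinuousAt, Metric.tendsto_nhds]
  intro ε hε
  filter_upwards [tube_estimate hg x (half_pos hε)] with y hy
  have h1 : sSup (g y '' Set.Icc (0:ℝ) 1) ≤ sSup (g x '' Set.Icc (0:ℝ) 1) + ε/2 := by
    apply csSup_le (hne.image _)
    rintro b ⟨t, ht, rfl⟩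
    have := le_csSup (hbdd x) (Set.mem_image_of_mem _ ht)
    have := hy t ht
    have := abs_lt.mp this
    linarith
  have h2 : sSup (g x '' Set.Icc (0:ℝ) 1) ≤ sSup (g y '' Set.Icc (0:ℝ) 1) + ε/2 := by
    apply csSup_le (hne.image _)
    rintro b ⟨t, ht, rfl⟩
    have := le_csSup (hbdd y) (Set.mem_image_of_mem _ ht)
    have := abs_lt.mp (hy t ht)
    linarith
  rw [Real.dist_eq, abs_lt]
  constructor <;> linarith

lemma continuous_sInf_image {X : Type*} [TopologicalSpace X] {g : X → ℝ → ℝ}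
    (hg : Continuous fun p : X × ℝ => g p.1 p.2) :
    Continuous fun x => sInf (g x '' Set.Icc (0:ℝ) 1) := by
  have hne : (Set.Icc (0:ℝ) 1).Nonempty := ⟨0, by norm_num⟩
  have hcx : ∀ x, Continuous (g x) := fun x => hg.comp (Continuous.prodMk_right x)
  have hbdd : ∀ x, BddBelow (g x '' Set.Icc (0:ℝ) 1) := fun x =>
    (isCompact_Icc.image (hcx x)).bddBelow
  rw [continuous_iff_continuousAt]
  intro x
  rw [ContinuousAt, Metric.tendsto_nhds]
  intro ε hε
  filter_upwards [tube_estimate hg x (half_pos hε)] with y hy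
  have h1 : sInf (g x '' Set.Icc (0:ℝ) 1) - ε/2 ≤ sInf (g y '' Set.Icc (0:ℝ) 1) := by
    apply le_csInf (hne.image _)
    rintro b ⟨t, ht, rfl⟩
    have := csInf_le (hbdd x) (Set.mem_image_of_mem (g x) ht)
    have := abs_lt.mp (hy t ht)
    linarith
  have h2 : sInf (g y '' Set.Icc (0:ℝ) 1) - ε/2 ≤ sInf (g x '' Set.Icc (0:ℝ) 1) := by
    apply le_csInf (hne.image _)
    rintro b ⟨t, ht, rfl⟩
    have := csInf_le (hbdd y) (Set.mem_image_of_mem (g y) ht)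
    have := abs_lt.mp (hy t ht)
    linarith
  rw [Real.dist_eq, abs_lt]
  constructor <;> linarith

lemma uIcc_eq_image_Icc (u v : ℝ) :
    Set.uIcc u v = (fun t : ℝ => u + t * (v - u)) '' Set.Icc (0:ℝ) 1 := by
  rw [← segment_eq_uIcc, segment_eq_image']
  simp [smul_eq_mul]

lemma continuous_update_pair (x : ℕ) :
    Continuous fun p : (ℕ → ℝ) × ℝ => Function.update p.1 x p.2 := by
  apply continuous_pi
  intro n
  simp only [Function.update_apply]
  split_ifs
  · exact continuous_snd
  · exact (continuous_apply n).comp continuous_fst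

lemma RTerm.continuous_eval (hS : S.ContinuousFuns) (t : RTerm S) :
    Continuous fun σ : ℕ → ℝ => t.eval σ := by
  induction t with
  | var n => exact continuous_apply n
  | app k f hf ts ih =>
    exact (hS k f hf).comp (continuous_pi fun i => ih i)

lemma RFormula.continuous_alpha (hS : S.ContinuousFuns) (φ : RFormula S) :
    Continuous fun σ : ℕ → ℝ => φ.alpha σ := by
  induction φ with
  | gt t c => exact (t.continuous_eval hS).sub continuous_const
  | ge t c => exact (t.continuous_eval hS).sub continuous_const
  | and φ ψ ihφ ihψ => exact ihφ.min ihψ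
  | or φ ψ ihφ ihψ => exact ihφ.max ihψ
  | ex x u v φ ih =>
    have hg : Continuous fun p : (ℕ → ℝ) × ℝ =>
        φ.alpha (Function.update p.1 x (u.eval p.1 + p.2 * (v.eval p.1 - u.eval p.1))) := by
      have hq : Continuous fun p : (ℕ → ℝ) × ℝ =>
          (p.1, u.eval p.1 + p.2 * (v.eval p.1 - u.eval p.1)) :=
        continuous_fst.prodMk
          (((u.continuous_eval hS).comp continuous_fst).add
            (continuous_snd.mul (((v.continuous_eval hS).comp continuous_fst).sub
              ((u.continuous_eval hS).comp continuous_fst))))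
      exact ih.comp ((continuous_update_pair x).comp hq)
    have heq : (fun σ : ℕ → ℝ => RFormula.alpha (.ex x u v φ) σ) =
        fun σ => sSup ((fun t : ℝ =>
          φ.alpha (Function.update σ x (u.eval σ + t * (v.eval σ - u.eval σ)))) ''
          Set.Icc (0:ℝ) 1) := by
      funext σ
      show sSup _ = _
      rw [uIcc_eq_image_Icc, Set.image_image]
    rw [show (fun σ : ℕ → ℝ => RFormula.alpha (.ex x u v φ) σ) = _ from heq]
    exact continuous_sSup_image hg
  | all x u v φ ih =>
    have hg : Continuous fun p : (ℕ → ℝ) × ℝ =>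
        φ.alpha (Function.update p.1 x (u.eval p.1 + p.2 * (v.eval p.1 - u.eval p.1))) := by
      have hq : Continuous fun p : (ℕ → ℝ) × ℝ =>
          (p.1, u.eval p.1 + p.2 * (v.eval p.1 - u.eval p.1)) :=
        continuous_fst.prodMk
          (((u.continuous_eval hS).comp continuous_fst).add
            (continuous_snd.mul (((v.continuous_eval hS).comp continuous_fst).sub
              ((u.continuous_eval hS).comp continuous_fst))))
      exact ih.comp ((continuous_update_pair x).comp hq)
    have heq : (fun σ : ℕ → ℝ => RFormula.alpha (.all x u v φ) σ) =
        fun σ => sInf ((fun t : ℝ =>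
          φ.alpha (Function.update σ x (u.eval σ + t * (v.eval σ - u.eval σ)))) ''
          Set.Icc (0:ℝ) 1) := by
      funext σ
      show sInf _ = _
      rw [uIcc_eq_image_Icc, Set.image_image]
    rw [show (fun σ : ℕ → ℝ => RFormula.alpha (.all x u v φ) σ) = _ from heq]
    exact continuous_sInf_image hg

lemma RFormula.key (hS : S.ContinuousFuns) (δ : ℝ) (φ : RFormula S) :
    ∀ σ, ((φ.strengthen δ).strict).Holds σ ↔ δ < φ.alpha σ := by
  induction φ with
  | gt t c =>
    intro σ
    show t.eval σ > c + δ ↔ δ < t.eval σ - c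
    constructor <;> intro h <;> linarith
  | ge t c =>
    intro σ
    show t.eval σ > c + δ ↔ δ < t.eval σ - c
    constructor <;> intro h <;> linarith
  | and φ ψ ihφ ihψ =>
    intro σ
    show (_ ∧ _) ↔ δ < min _ _
    rw [lt_min_iff, ihφ σ, ihψ σ]
  | or φ ψ ihφ ihψ =>
    intro σ
    show (_ ∨ _) ↔ δ < max _ _
    rw [lt_max_iff, ihφ σ, ihψ σ]
  | ex x u v φ ih =>
    intro σ
    have hca : Continuous fun a : ℝ => φ.alpha (Function.update σ x a) :=
      (φ.continuous_alpha hS).comp ((continuous_update_pair x).comp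
        (continuous_const.prodMk continuous_id))
    have hcs : IsCompact ((fun a => φ.alpha (Function.update σ x a)) ''
        Set.uIcc (u.eval σ) (v.eval σ)) := isCompact_uIcc.image hca
    show (∃ a ∈ Set.uIcc (u.eval σ) (v.eval σ),
        ((φ.strengthen δ).strict).Holds (Function.update σ x a)) ↔ δ < sSup _
    rw [lt_csSup_iff hcs.bddAbove (Set.nonempty_uIcc.image _), Set.exists_mem_image]
    exact exists_congr fun a => and_congr_right fun _ => ih _
  | all x u v φ ih =>
    intro σ
    have hca : Continuous fun a : ℝ => φ.alpha (Function.update σ x a) :=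
      (φ.continuous_alpha hS).comp ((continuous_update_pair x).comp
        (continuous_const.prodMk continuous_id))
    have hcs : IsCompact ((fun a => φ.alpha (Function.update σ x a)) ''
        Set.uIcc (u.eval σ) (v.eval σ)) := isCompact_uIcc.image hca
    show (∀ a ∈ Set.uIcc (u.eval σ) (v.eval σ),
        ((φ.strengthen δ).strict).Holds (Function.update σ x a)) ↔ δ < sInf _
    constructor
    · intro h
      obtain ⟨a, ha, heq⟩ := hcs.sInf_mem (Set.nonempty_uIcc.image _)
      rw [← heq]
      exact (ih _).mp (h a ha)
    · intro h a ha
      refine (ih _).mpr (lt_of_lt_of_le h ?_)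
      exact csInf_le hcs.bddBelow (Set.mem_image_of_mem _ ha)

theorem strict_strengthen_iff_alpha_gt (S : Sig) (hS : S.ContinuousFuns)
    (φ : RFormula S) (hφ : φ.IsBoundedSentence) (δ : ℝ) (hδ : 0 ≤ δ) :
    ((φ.strengthen δ).strict).IsTrue ↔ φ.alpha (fun _ => 0) > δ := by
  exact RFormula.key hS δ φ (fun _ => 0)
end

section
/- The set {n ∈ ℕ | a_n = 0} is not computable; that is, the predicate n ↦ (a_n = 0) is not a ComputablePred. -/
/-- `h n i = 1` if the `n`-th partial recursive program (the `Nat.Partrec.Code` with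
code `n` in Mathlib's enumeration) halts on input `n` within `i` steps (in the sense
of `Nat.Partrec.Code.evaln`), and `0` otherwise. -/
noncomputable def haltInd (n i : ℕ) : ℝ :=
  if (Nat.Partrec.Code.evaln i (Denumerable.ofNat Nat.Partrec.Code n) n).isSome then 1 else 0

/-- `a n = ∑_{i=0}^∞ h_n(i) · 2^{-i}`. -/
noncomputable def aSeq (n : ℕ) : ℝ := ∑' i : ℕ, haltInd n i / 2 ^ i

open Nat.Partrec Nat.Partrec.Code in
lemma aSeq_eq_zero_iff (n : ℕ) :
    aSeq n = 0 ↔ ¬ (eval (Denumerable.ofNat Code n) n).Dom := by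
  have hnn : ∀ i, 0 ≤ haltInd n i / 2 ^ i := by
    intro i
    have : (0:ℝ) ≤ haltInd n i := by unfold haltInd; split <;> norm_num
    positivity
  have hsum : Summable (fun i : ℕ => haltInd n i / 2 ^ i) := by
    refine Summable.of_nonneg_of_le hnn (fun i => ?_) summable_geometric_two
    have : haltInd n i ≤ 1 := by unfold haltInd; split <;> norm_num
    rw [div_pow, one_pow]
    exact div_le_div_of_nonneg_right this (by positivity) |>.trans_eq (by ring_nf) |>.trans le_rfl
  constructor
  · intro h hd
    obtain ⟨x, hx⟩ := Part.dom_iff_mem.1 hd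
    obtain ⟨k, hk⟩ := evaln_complete.1 hx
    have hk' : haltInd n k = 1 := by
      unfold haltInd
      rw [if_pos (Option.isSome_iff_exists.2 ⟨x, hk⟩)]
    have hle : haltInd n k / 2 ^ k ≤ aSeq n := Summable.le_tsum hsum k (fun j _ => hnn j)
    rw [h, hk'] at hle
    have : (0:ℝ) < 1 / 2 ^ k := by positivity
    linarith
  · intro h
    have hz : ∀ i, haltInd n i / 2 ^ i = 0 := by
      intro i
      unfold haltInd
      rw [if_neg, zero_div]
      intro hs
      obtain ⟨x, hx⟩ := Option.isSome_iff_exists.1 hs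
      exact h (Part.dom_iff_mem.2 ⟨x, evaln_complete.2 ⟨i, hx⟩⟩)
    unfold aSeq
    simp [hz]

open Nat.Partrec Nat.Partrec.Code in
lemma diag_halting_not_computable :
    ¬ ComputablePred (fun n : ℕ => (eval (Denumerable.ofNat Code n) n).Dom) := by
  intro h
  obtain ⟨inst, hc⟩ := h
  -- define f n = if halts then none else some 0
  have hf : Nat.Partrec fun n : ℕ =>
      cond (decide ((eval (Denumerable.ofNat Code n) n).Dom)) Part.none (Part.some 0) := by
    exact Partrec.nat_iff.1 (Partrec.cond hc Partrec.none (Computable.const 0).partrec)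
  obtain ⟨c, hcode⟩ := exists_code.1 hf
  set m := Encodable.encode c with hm
  have hofNat : (Denumerable.ofNat Code m) = c := by
    simp [hm, Denumerable.ofNat_encode]
  have heq := congrFun hcode m
  have hd2 : ((Denumerable.ofNat Code m).eval m).Dom ↔ (eval c m).Dom := by rw [hofNat]
  by_cases hd : (eval c m).Dom
  · have : eval c m = Part.none := by
      rw [heq, decide_eq_true (hd2.2 hd)]; rfl
    rw [this] at hd
    exact Part.not_none_dom hd
  · have : eval c m = Part.some 0 := by
      rw [heq, decide_eq_false (fun hh => hd (hd2.1 hh))]; rfl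
    rw [this] at hd
    exact hd trivial

theorem aSeq_zero_not_computable :
    ¬ ComputablePred (fun n : ℕ => aSeq n = 0) := by
  intro h
  have h2 : ComputablePred (fun n : ℕ =>
      ¬ (Nat.Partrec.Code.eval (Denumerable.ofNat Nat.Partrec.Code n) n).Dom) :=
    h.of_eq fun n => by rw [aSeq_eq_zero_iff]
  exact diag_halting_not_computable (h2.not.of_eq fun n => not_not)
end

section
/- Let r be a nonzero real number. Then the set {n ∈ ℕ | ∃x ∈ ℝ, a_n·x = r} is not computable; that is, the predicate n ↦ (∃x ∈ ℝ, a_n·x = r) is not a ComputablePred. -/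
lemma haltInd_nonneg (n i : ℕ) : 0 ≤ haltInd n i := by
  unfold haltInd; split <;> norm_num

lemma summable_aux (n : ℕ) : Summable (fun i => haltInd n i / 2 ^ i) := by
  refine Summable.of_nonneg_of_le
    (fun i => div_nonneg (haltInd_nonneg n i) (by positivity)) (fun i => ?_)
    summable_geometric_two
  have h1 : haltInd n i ≤ 1 := by unfold haltInd; split <;> norm_num
  have h2 : ((1 : ℝ) / 2) ^ i = 1 / 2 ^ i := by rw [div_pow, one_pow]
  rw [h2]
  gcongr

lemma aSeq_ne_zero_iff (n : ℕ) :
    aSeq n ≠ 0 ↔ ((Denumerable.ofNat Nat.Partrec.Code n).eval n).Dom := by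
  constructor
  · intro h
    by_contra hdom
    apply h
    rw [aSeq]
    convert tsum_zero with i
    have : ¬ (Nat.Partrec.Code.evaln i (Denumerable.ofNat Nat.Partrec.Code n) n).isSome := by
      intro hs
      obtain ⟨x, hx⟩ := Option.isSome_iff_exists.1 hs
      exact hdom (Part.dom_iff_mem.2 ⟨x, Nat.Partrec.Code.evaln_sound hx⟩)
    simp [haltInd, this]
  · intro h
    obtain ⟨x, hx⟩ := Part.dom_iff_mem.1 h
    obtain ⟨k, hk⟩ := Nat.Partrec.Code.evaln_complete.1 hx
    have hs : (Nat.Partrec.Code.evaln k (Denumerable.ofNat Nat.Partrec.Code n) n).isSome :=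
      Option.isSome_iff_exists.2 ⟨x, hk⟩
    have hpos : 0 < aSeq n := by
      refine Summable.tsum_pos (summable_aux n)
        (fun i => div_nonneg (haltInd_nonneg n i) (by positivity)) k ?_
      have : haltInd n k = 1 := by simp [haltInd, hs]
      rw [this]
      positivity
    exact ne_of_gt hpos

lemma diag_halting : ¬ ComputablePred
    (fun n : ℕ => ((Denumerable.ofNat Nat.Partrec.Code n).eval n).Dom) := by
  intro h
  obtain ⟨f, hf, hpf⟩ := ComputablePred.computable_iff.1 h
  set g : ℕ →. ℕ := fun n => cond (f n) Part.none (Part.some 0) with hg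
  have hgp : Partrec g := Partrec.cond hf Partrec.none (Partrec.const' 0)
  obtain ⟨c, hc⟩ := Nat.Partrec.Code.exists_code.1 (Partrec.nat_iff.1 hgp)
  set m := Encodable.encode c with hm
  have hcm : Denumerable.ofNat Nat.Partrec.Code m = c := by
    simp [hm]
  have hdom : ((Denumerable.ofNat Nat.Partrec.Code m).eval m).Dom ↔ f m = false := by
    rw [hcm, hc, hg]
    cases hfm : f m <;> simp [hfm]
  have := congrFun hpf m
  simp only [eq_iff_iff] at this
  rw [this] at hdom
  cases hfm : f m <;> rw [hfm] at hdom <;> simp [hfm] at hdom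

theorem aSeq_solvable_not_computable (r : ℝ) (hr : r ≠ 0) :
    ¬ ComputablePred (fun n : ℕ => ∃ x : ℝ, aSeq n * x = r) := by
  intro h
  apply diag_halting
  apply h.of_eq
  intro n
  rw [← aSeq_ne_zero_iff]
  constructor
  · rintro ⟨x, hx⟩ h0
    rw [h0, zero_mul] at hx
    exact hr hx.symm
  · intro h0
    exact ⟨r / aSeq n, by field_simp⟩
end
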